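/- Let X and Y be random variables with values in a measurable space 𝒳, whose distributions have densities f_X(x) = C_X · g_X(f(x)) and f_Y(x) = C_Y · g_Y(f(x)) with respect to a common reference measure μ, where g_X, g_Y : ℝ → ℝ are positive measurable functions, f : 𝒳 → ℝ is measurable, and C_X, C_Y ∈ ℝ are normalising constants. If g_X/g_Y is monotone increasing, then for every t ∈ ℝ and every measurable set A ⊆ 𝒳 with P(X ∈ A) > 0 and P(Y ∈ A) > 0, one has P(f(X) > t | X ∈ A) ≥ P(f(Y) > t | Y ∈ A). -/

import Mathlib

/-!
Put `c = g_X(t) / g_Y(t)` and `k = C_X c / C_Y`. Monotonicity of `g_X / g_Y` says that the density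
of `X` is at least `k` times that of `Y` where `f > t` and at most `k` times it where `f ≤ t`.
Writing `a, b` (resp. `a', b'`) for the masses of `A ∩ {f > t}` and `A ∩ {f ≤ t}` under the law
of `X` (resp. `Y`), this gives `k a' ≤ a` and `b ≤ k b'`, hence `a' b ≤ a b'`, which is the
cross-multiplied form of `a' / (a' + b') ≤ a / (a + b)`.
-/

open MeasureTheory ENNReal

theorem mul_add_le_mul_add_of_mul_le_of_le_mul {R : Type*} [CommSemiring R] [Preorder R]
    [AddLeftMono R] [MulLeftMono R] {a b a' b' k : R} (ha : k * a' ≤ a) (hb : b ≤ k * b') :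
    a' * (a + b) ≤ a * (a' + b') := by
  calc a' * (a + b) ≤ a' * a + a' * (k * b') := by rw [mul_add]; gcongr
    _ = a * a' + (k * a') * b' := by ring
    _ ≤ a * a' + a * b' := by gcongr
    _ = a * (a' + b') := by ring

theorem ENNReal.div_le_div_of_mul_le_mul {a b c d : ℝ≥0∞} (hb0 : b ≠ 0) (hbt : b ≠ ∞)
    (hd0 : d ≠ 0) (hdt : d ≠ ∞) (h : a * d ≤ c * b) : a / b ≤ c / d := by
  rw [ENNReal.div_le_iff_le_mul (Or.inl hb0) (Or.inl hbt), div_eq_mul_inv, mul_right_comm,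
    ← div_eq_mul_inv, ENNReal.le_div_iff_mul_le (Or.inl hd0) (Or.inl hdt)]
  exact h

section Measures

variable {α : Type*} [MeasurableSpace α]

theorem measure_inter_div_le_of_single_crossing {ν ν' : Measure α} {A B : Set α}
    (hB : MeasurableSet B) {k : ℝ≥0∞} (hin : k * ν (B ∩ A) ≤ ν' (B ∩ A))
    (hout : ν' (A \ B) ≤ k * ν (A \ B)) (hν0 : ν A ≠ 0) (hνtop : ν A ≠ ∞)
    (hν'0 : ν' A ≠ 0) (hν'top : ν' A ≠ ∞) :
    ν (B ∩ A) / ν A ≤ ν' (B ∩ A) / ν' A := by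
  refine ENNReal.div_le_div_of_mul_le_mul hν0 hνtop hν'0 hν'top ?_
  rw [← measure_inter_add_sdiff A hB, ← measure_inter_add_sdiff A hB, Set.inter_comm A B]
  exact mul_add_le_mul_add_of_mul_le_of_le_mul hin hout

variable {μ : Measure α} {ρ ρ' : α → ℝ≥0∞} {k : ℝ≥0∞} {s : Set α}

theorem const_mul_withDensity_apply_le (hk : k ≠ ∞) (hs : MeasurableSet s)
    (h : ∀ x ∈ s, k * ρ x ≤ ρ' x) : k * μ.withDensity ρ s ≤ μ.withDensity ρ' s := by
  rw [withDensity_apply _ hs, withDensity_apply _ hs, ← lintegral_const_mul' k _ hk]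
  exact setLIntegral_mono' hs h

theorem withDensity_apply_le_const_mul (hk : k ≠ ∞) (hs : MeasurableSet s)
    (h : ∀ x ∈ s, ρ' x ≤ k * ρ x) : μ.withDensity ρ' s ≤ k * μ.withDensity ρ s := by
  rw [withDensity_apply _ hs, withDensity_apply _ hs, ← lintegral_const_mul' k _ hk]
  exact setLIntegral_mono' hs h

theorem pos_of_withDensity_ofReal_mul_ne_zero {C : ℝ} {g : α → ℝ} (hg : ∀ x, 0 ≤ g x)
    (h : μ.withDensity (fun x => ENNReal.ofReal (C * g x)) s ≠ 0) : 0 < C := by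
  by_contra! hC
  have hzero : (fun x => ENNReal.ofReal (C * g x)) = 0 := funext fun x =>
    ENNReal.ofReal_eq_zero.mpr (mul_nonpos_of_nonpos_of_nonneg hC (hg x))
  simp [hzero] at h

end Measures

section MonotoneRatio

variable {gX gY : ℝ → ℝ} {CX CY t s : ℝ}

theorem ENNReal.ofReal_div_mul_ofReal_mul_cancel {q : ℝ} (hCY : 0 < CY) (hq : 0 ≤ q) (c : ℝ) :
    ENNReal.ofReal (CX * c / CY) * ENNReal.ofReal (CY * q) = ENNReal.ofReal (CX * c * q) := by
  rw [← ENNReal.ofReal_mul' (by positivity)]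
  congr 1
  field_simp

variable (hCX : 0 ≤ CX) (hCY : 0 < CY) (hgY : ∀ s, 0 < gY s)
  (hmono : Monotone fun s => gX s / gY s)
include hCX hCY hgY hmono

theorem ENNReal.ofReal_ratio_mul_le_of_le (hts : t ≤ s) :
    ENNReal.ofReal (CX * (gX t / gY t) / CY) * ENNReal.ofReal (CY * gY s)
      ≤ ENNReal.ofReal (CX * gX s) := by
  rw [ofReal_div_mul_ofReal_mul_cancel hCY (hgY s).le, mul_assoc]
  have hratio : gX t / gY t * gY s ≤ gX s := (le_div_iff₀ (hgY s)).mp (hmono hts)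
  gcongr

theorem ENNReal.le_ofReal_ratio_mul_of_le (hst : s ≤ t) :
    ENNReal.ofReal (CX * gX s)
      ≤ ENNReal.ofReal (CX * (gX t / gY t) / CY) * ENNReal.ofReal (CY * gY s) := by
  rw [ofReal_div_mul_ofReal_mul_cancel hCY (hgY s).le, mul_assoc]
  have hratio : gX s ≤ gX t / gY t * gY s := (div_le_iff₀ (hgY s)).mp (hmono hst)
  gcongr

end MonotoneRatio

theorem stmt12_general {α : Type*} [MeasurableSpace α] (μ : Measure α)
    (gX gY : ℝ → ℝ)
    (hgXpos : ∀ s, 0 < gX s) (hgYpos : ∀ s, 0 < gY s)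
    (f : α → ℝ) (hf : Measurable f) (CX CY : ℝ)
    (hX : μ.withDensity (fun x => ENNReal.ofReal (CX * gX (f x))) Set.univ = 1)
    (hY : μ.withDensity (fun x => ENNReal.ofReal (CY * gY (f x))) Set.univ = 1)
    (hmono : Monotone fun s => gX s / gY s) :
    ∀ (t : ℝ) (A : Set α), MeasurableSet A →
      0 < μ.withDensity (fun x => ENNReal.ofReal (CX * gX (f x))) A →
      0 < μ.withDensity (fun x => ENNReal.ofReal (CY * gY (f x))) A →
      μ.withDensity (fun x => ENNReal.ofReal (CY * gY (f x))) ({x | t < f x} ∩ A) /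
          μ.withDensity (fun x => ENNReal.ofReal (CY * gY (f x))) A
        ≤ μ.withDensity (fun x => ENNReal.ofReal (CX * gX (f x))) ({x | t < f x} ∩ A) /
          μ.withDensity (fun x => ENNReal.ofReal (CX * gX (f x))) A := by
  intro t A hA hXA hYA
  have : IsProbabilityMeasure (μ.withDensity fun x => ENNReal.ofReal (CX * gX (f x))) := ⟨hX⟩
  have : IsProbabilityMeasure (μ.withDensity fun x => ENNReal.ofReal (CY * gY (f x))) := ⟨hY⟩
  have hCX := pos_of_withDensity_ofReal_mul_ne_zero (fun x => (hgXpos (f x)).le) hXA.ne'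
  have hCY := pos_of_withDensity_ofReal_mul_ne_zero (fun x => (hgYpos (f x)).le) hYA.ne'
  have hB : MeasurableSet {x | t < f x} := measurableSet_lt measurable_const hf
  refine measure_inter_div_le_of_single_crossing hB (k := ENNReal.ofReal (CX * (gX t / gY t) / CY))
    ?_ ?_ hYA.ne' (measure_ne_top _ A) hXA.ne' (measure_ne_top _ A)
  · exact const_mul_withDensity_apply_le ofReal_ne_top (hB.inter hA) fun x hx =>
      ofReal_ratio_mul_le_of_le hCX.le hCY hgYpos hmono (le_of_lt hx.1)
  · exact withDensity_apply_le_const_mul ofReal_ne_top (hA.diff hB) fun x hx =>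
      le_ofReal_ratio_mul_of_le hCX.le hCY hgYpos hmono (not_lt.mp hx.2)

/-- Let `X`, `Y` be random variables with laws given by densities
`x ↦ C_X · g_X(f x)` and `x ↦ C_Y · g_Y(f x)` with respect to a common reference
measure `μ`, where `g_X, g_Y` are positive measurable functions on `ℝ`. If
`g_X / g_Y` is monotone increasing, then for every `t` and every measurable set `A`
of positive probability under both laws,
`P(f(X) > t ∣ X ∈ A) ≥ P(f(Y) > t ∣ Y ∈ A)`, where conditional probabilities are
the ratios `P(f(X) > t ∧ X ∈ A) / P(X ∈ A)`. -/
theorem stmt12 {α : Type*} [MeasurableSpace α] (μ : Measure α)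
    (gX gY : ℝ → ℝ) (hgX : Measurable gX) (hgY : Measurable gY)
    (hgXpos : ∀ s, 0 < gX s) (hgYpos : ∀ s, 0 < gY s)
    (f : α → ℝ) (hf : Measurable f) (CX CY : ℝ)
    (hX : μ.withDensity (fun x => ENNReal.ofReal (CX * gX (f x))) Set.univ = 1)
    (hY : μ.withDensity (fun x => ENNReal.ofReal (CY * gY (f x))) Set.univ = 1)
    (hmono : Monotone fun s => gX s / gY s) :
    ∀ (t : ℝ) (A : Set α), MeasurableSet A →
      0 < μ.withDensity (fun x => ENNReal.ofReal (CX * gX (f x))) A →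
      0 < μ.withDensity (fun x => ENNReal.ofReal (CY * gY (f x))) A →
      μ.withDensity (fun x => ENNReal.ofReal (CY * gY (f x))) ({x | t < f x} ∩ A) /
          μ.withDensity (fun x => ENNReal.ofReal (CY * gY (f x))) A
        ≤ μ.withDensity (fun x => ENNReal.ofReal (CX * gX (f x))) ({x | t < f x} ∩ A) /
          μ.withDensity (fun x => ENNReal.ofReal (CX * gX (f x))) A :=
  stmt12_general μ gX gY hgXpos hgYpos f hf CX CY hX hY hmono
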